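/- For A-bounded operators P, Q, R, S on H, the 𝔸-numerical radius of the off-diagonal part satisfies ω_𝔸([[0, Q],[R, 0]]) ≤ ω_𝔸([[P, Q],[R, S]]), where the matrices act on H⊕H and 𝔸 = diag(A,A). -/

import Mathlib

open ContinuousLinearMap

/-- The `A`-seminorm of a vector: `‖x‖_A = √⟨Ax, x⟩`. -/
noncomputable def vnormA {H : Type*} [NormedAddCommGroup H] [InnerProductSpace ℂ H]
    (A : H →L[ℂ] H) (x : H) : ℝ :=
  Real.sqrt (RCLike.re (inner ℂ (A x) x : ℂ))

/-- `T` is `A`-bounded, i.e. `T ∈ B_{A^{1/2}}(H)`. -/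
def ABounded {H : Type*} [NormedAddCommGroup H] [InnerProductSpace ℂ H]
    (A T : H →L[ℂ] H) : Prop :=
  ∃ c : ℝ, 0 < c ∧ ∀ x, vnormA A (T x) ≤ c * vnormA A x

/-- The `A`-operator seminorm `‖T‖_A = sup{‖Tx‖_A : ‖x‖_A = 1}`. -/
noncomputable def opNormA {H : Type*} [NormedAddCommGroup H] [InnerProductSpace ℂ H]
    (A T : H →L[ℂ] H) : ℝ :=
  sSup {c : ℝ | ∃ x : H, vnormA A x = 1 ∧ c = vnormA A (T x)}

/-- The `A`-numerical radius `ω_A(T) = sup{|⟨ATx, x⟩| : ‖x‖_A = 1}`. -/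
noncomputable def wA {H : Type*} [NormedAddCommGroup H] [InnerProductSpace ℂ H]
    (A T : H →L[ℂ] H) : ℝ :=
  sSup {c : ℝ | ∃ x : H, vnormA A x = 1 ∧ c = ‖(inner ℂ (A (T x)) x : ℂ)‖}

/-- `Ts` is the reduced (Douglas) solution of `AX = T*A`, i.e. `Ts = T^{♯_A}`. -/
def IsReducedAdjoint {H : Type*} [NormedAddCommGroup H] [InnerProductSpace ℂ H]
    [CompleteSpace H] (A T Ts : H →L[ℂ] H) : Prop :=
  A ∘L Ts = (ContinuousLinearMap.adjoint T) ∘L A ∧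
    ∀ y, Ts y ∈ closure (Set.range A)

/-- The `2 × 2` operator matrix `[[P, Q], [R, S]]` acting on `H ⊕ H` (with the `ℓ²` product
inner product). -/
noncomputable def blk {H : Type*} [NormedAddCommGroup H] [InnerProductSpace ℂ H]
    (P Q R S : H →L[ℂ] H) : WithLp 2 (H × H) →L[ℂ] WithLp 2 (H × H) :=
  letI e := (WithLp.prodContinuousLinearEquiv 2 ℂ H H)
  (e.symm.toContinuousLinearMap) ∘L
    ((P.comp (fst ℂ H H) + Q.comp (snd ℂ H H)).prod
      (R.comp (fst ℂ H H) + S.comp (snd ℂ H H))) ∘L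
    (e.toContinuousLinearMap)

/-- `𝔸 = diag(A, A)` on `H ⊕ H`. -/
noncomputable def AA {H : Type*} [NormedAddCommGroup H] [InnerProductSpace ℂ H]
    (A : H →L[ℂ] H) : WithLp 2 (H × H) →L[ℂ] WithLp 2 (H × H) :=
  blk A 0 0 A

/-! With `U = diag(I, -I)`, which preserves the `𝔸`-seminorm, the off-diagonal part `T₀` of
`T = [[P, Q], [R, S]]` is `(T - U T U) / 2`; hence `⟨𝔸 T₀ x, x⟩` is half the difference of
`⟨𝔸 T x, x⟩` and `⟨𝔸 T Ux, Ux⟩`, both bounded by `ω_𝔸(T)`. The `A`-boundedness of the entries,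
via Cauchy–Schwarz for `⟨A·, ·⟩`, is what makes the supremum defining `ω_𝔸(T)` finite. -/

section SemiInner

variable {H : Type*} [NormedAddCommGroup H] [InnerProductSpace ℂ H]

noncomputable abbrev ContinuousLinearMap.IsPositive.preInnerProductSpaceCore {A : H →L[ℂ] H}
    (hA : A.IsPositive) : PreInnerProductSpace.Core ℂ H where
  inner x y := inner ℂ (A x) y
  conj_inner_symm x y := by rw [inner_conj_symm, hA.inner_left_eq_inner_right]
  re_inner_nonneg := hA.re_inner_nonneg_left
  add_left x y z := by simp only [map_add, inner_add_left]
  smul_left x y r := by simp only [map_smul, inner_smul_left]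

theorem norm_inner_le_vnormA_mul {A : H →L[ℂ] H} (hA : A.IsPositive) (x y : H) :
    ‖inner ℂ (A x) y‖ ≤ vnormA A x * vnormA A y :=
  -- the seminorm of this core is `vnormA A` by definition
  @InnerProductSpace.Core.norm_inner_le_norm ℂ H _ _ _ hA.preInnerProductSpaceCore x y

theorem ABounded.exists_norm_inner_le {A T : H →L[ℂ] H} (hA : A.IsPositive)
    (hT : ABounded A T) :
    ∃ c, ∀ u v, vnormA A u ≤ 1 → vnormA A v ≤ 1 → ‖inner ℂ (A (T u)) v‖ ≤ c := by
  obtain ⟨c, hc, hTc⟩ := hT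
  refine ⟨c, fun u v hu hv => ?_⟩
  have hu0 : 0 ≤ vnormA A u := Real.sqrt_nonneg _
  have hv0 : 0 ≤ vnormA A v := Real.sqrt_nonneg _
  calc ‖inner ℂ (A (T u)) v‖ ≤ vnormA A (T u) * vnormA A v := norm_inner_le_vnormA_mul hA _ _
    _ ≤ (c * vnormA A u) * vnormA A v := by gcongr; exact hTc u
    _ ≤ (c * 1) * 1 := by gcongr
    _ = c := by ring

end SemiInner

section NumericalRadius

variable {E : Type*} [NormedAddCommGroup E] [InnerProductSpace ℂ E]

theorem wA_nonneg (A T : E →L[ℂ] E) : 0 ≤ wA A T :=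
  Real.sSup_nonneg <| by rintro _ ⟨x, -, rfl⟩; exact norm_nonneg _

theorem norm_inner_le_wA {A T : E →L[ℂ] E}
    (hT : ∃ M, ∀ x, vnormA A x = 1 → ‖inner ℂ (A (T x)) x‖ ≤ M) {x : E} (hx : vnormA A x = 1) :
    ‖inner ℂ (A (T x)) x‖ ≤ wA A T := by
  obtain ⟨M, hM⟩ := hT
  exact le_csSup ⟨M, by rintro _ ⟨y, hy, rfl⟩; exact hM y hy⟩ ⟨x, hx, rfl⟩

theorem wA_le {A T : E →L[ℂ] E} {c : ℝ} (hc : 0 ≤ c)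
    (h : ∀ x, vnormA A x = 1 → ‖inner ℂ (A (T x)) x‖ ≤ c) : wA A T ≤ c :=
  Real.sSup_le (by rintro _ ⟨x, hx, rfl⟩; exact h x hx) hc

end NumericalRadius

section BlockMatrix

variable {H : Type*} [NormedAddCommGroup H] [InnerProductSpace ℂ H]

@[simp]
theorem blk_apply_fst (P Q R S : H →L[ℂ] H) (x : WithLp 2 (H × H)) :
    (blk P Q R S x).fst = P x.fst + Q x.snd := rfl

@[simp]
theorem blk_apply_snd (P Q R S : H →L[ℂ] H) (x : WithLp 2 (H × H)) :
    (blk P Q R S x).snd = R x.fst + S x.snd := rfl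

theorem inner_AA_apply (A : H →L[ℂ] H) (x y : WithLp 2 (H × H)) :
    inner ℂ (AA A x) y = inner ℂ (A x.fst) y.fst + inner ℂ (A x.snd) y.snd := by
  simp [AA, WithLp.prod_inner_apply]

theorem inner_AA_blk_apply_self (A P Q R S : H →L[ℂ] H) (x : WithLp 2 (H × H)) :
    inner ℂ (AA A (blk P Q R S x)) x =
      inner ℂ (A (P x.fst)) x.fst + inner ℂ (A (Q x.snd)) x.fst +
        (inner ℂ (A (R x.fst)) x.snd + inner ℂ (A (S x.snd)) x.snd) := by
  simp only [inner_AA_apply, blk_apply_fst, blk_apply_snd, map_add, inner_add_left]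

theorem vnormA_AA (A : H →L[ℂ] H) (x : WithLp 2 (H × H)) :
    vnormA (AA A) x =
      √(RCLike.re (inner ℂ (A x.fst) x.fst) + RCLike.re (inner ℂ (A x.snd) x.snd)) := by
  rw [vnormA, inner_AA_apply, map_add]

theorem vnormA_fst_le_and_snd_le_of_vnormA_AA_eq_one {A : H →L[ℂ] H} (hA : A.IsPositive)
    {x : WithLp 2 (H × H)} (hx : vnormA (AA A) x = 1) :
    vnormA A x.fst ≤ 1 ∧ vnormA A x.snd ≤ 1 := by
  rw [vnormA_AA, Real.sqrt_eq_one] at hx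
  have h₁ := hA.re_inner_nonneg_left x.fst
  have h₂ := hA.re_inner_nonneg_left x.snd
  exact ⟨Real.sqrt_le_one.mpr (by linarith), Real.sqrt_le_one.mpr (by linarith)⟩

theorem exists_norm_inner_AA_blk_le {A P Q R S : H →L[ℂ] H} (hA : A.IsPositive)
    (hP : ABounded A P) (hQ : ABounded A Q) (hR : ABounded A R) (hS : ABounded A S) :
    ∃ M, ∀ x, vnormA (AA A) x = 1 → ‖inner ℂ (AA A (blk P Q R S x)) x‖ ≤ M := by
  obtain ⟨cP, hcP⟩ := hP.exists_norm_inner_le hA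
  obtain ⟨cQ, hcQ⟩ := hQ.exists_norm_inner_le hA
  obtain ⟨cR, hcR⟩ := hR.exists_norm_inner_le hA
  obtain ⟨cS, hcS⟩ := hS.exists_norm_inner_le hA
  refine ⟨cP + cQ + (cR + cS), fun x hx => ?_⟩
  obtain ⟨h₁, h₂⟩ := vnormA_fst_le_and_snd_le_of_vnormA_AA_eq_one hA hx
  rw [inner_AA_blk_apply_self]
  have tP := hcP x.fst x.fst h₁ h₁
  have tQ := hcQ x.snd x.fst h₂ h₁
  have tR := hcR x.fst x.snd h₁ h₂
  have tS := hcS x.snd x.snd h₂ h₂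
  calc _ ≤ ‖inner ℂ (A (P x.fst)) x.fst + inner ℂ (A (Q x.snd)) x.fst‖
        + ‖inner ℂ (A (R x.fst)) x.snd + inner ℂ (A (S x.snd)) x.snd‖ := norm_add_le _ _
    _ ≤ _ := add_le_add ((norm_add_le _ _).trans (add_le_add tP tQ))
        ((norm_add_le _ _).trans (add_le_add tR tS))

def negSnd (x : WithLp 2 (H × H)) : WithLp 2 (H × H) := WithLp.toLp 2 (x.fst, -x.snd)

theorem vnormA_AA_negSnd (A : H →L[ℂ] H) (x : WithLp 2 (H × H)) :
    vnormA (AA A) (negSnd x) = vnormA (AA A) x := by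
  simp [vnormA_AA, negSnd]

-- `negSnd` is `U = diag(I, -I)`.
theorem two_mul_inner_AA_blk_offDiag (A P Q R S : H →L[ℂ] H) (x : WithLp 2 (H × H)) :
    2 * inner ℂ (AA A (blk 0 Q R 0 x)) x =
      inner ℂ (AA A (blk P Q R S x)) x - inner ℂ (AA A (blk P Q R S (negSnd x))) (negSnd x) := by
  simp only [inner_AA_blk_apply_self, negSnd, WithLp.toLp_fst, WithLp.toLp_snd, zero_apply,
    map_zero, map_neg, inner_zero_left, inner_neg_left, inner_neg_right, neg_neg]
  ring

end BlockMatrix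

theorem stmt1_general {H : Type*} [NormedAddCommGroup H] [InnerProductSpace ℂ H]
    (A : H →L[ℂ] H) (hA : A.IsPositive)
    (P Q R S : H →L[ℂ] H) (hP : ABounded A P) (hQ : ABounded A Q)
    (hR : ABounded A R) (hS : ABounded A S) :
    wA (AA A) (blk 0 Q R 0) ≤ wA (AA A) (blk P Q R S) := by
  have hbdd := exists_norm_inner_AA_blk_le hA hP hQ hR hS
  refine wA_le (wA_nonneg _ _) fun x hx => ?_
  have hx' : vnormA (AA A) (negSnd x) = 1 := (vnormA_AA_negSnd A x).trans hx
  calc ‖inner ℂ (AA A (blk 0 Q R 0 x)) x‖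
      = ‖inner ℂ (AA A (blk P Q R S x)) x
          - inner ℂ (AA A (blk P Q R S (negSnd x))) (negSnd x)‖ / 2 := by
        rw [← two_mul_inner_AA_blk_offDiag, norm_mul]; norm_num
    _ ≤ (‖inner ℂ (AA A (blk P Q R S x)) x‖
          + ‖inner ℂ (AA A (blk P Q R S (negSnd x))) (negSnd x)‖) / 2 := by
        gcongr; exact norm_sub_le _ _
    _ ≤ (wA (AA A) (blk P Q R S) + wA (AA A) (blk P Q R S)) / 2 := by
        gcongr <;> exact norm_inner_le_wA hbdd ‹_›
    _ = wA (AA A) (blk P Q R S) := by ring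

theorem stmt1 {H : Type*} [NormedAddCommGroup H] [InnerProductSpace ℂ H] [CompleteSpace H]
    (A : H →L[ℂ] H) (hA : A.IsPositive)
    (P Q R S : H →L[ℂ] H) (hP : ABounded A P) (hQ : ABounded A Q)
    (hR : ABounded A R) (hS : ABounded A S) :
    wA (AA A) (blk 0 Q R 0) ≤ wA (AA A) (blk P Q R S) :=
  stmt1_general A hA P Q R S hP hQ hR hS
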